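/- If X ∈ W₀ and X(z) tends to a limit L ∈ Matrix (Fin 2) (Fin 2) ℂ as z → 0 along ℂ ∖ Λ, then there exists c ∈ ℂ such that L = c • 1 and X(z) = c • 1 for all z ∈ ℂ ∖ Λ. In particular, no element of W₀ behaves as σ_a + O(z) at z = 0 for any a = 1, 2, 3. -/

import Mathlib

noncomputable section

open Filter Topology

attribute [local instance] Matrix.normedAddCommGroup Matrix.normedSpace

/-- The Pauli matrix σ₁. -/
def σ1 : Matrix (Fin 2) (Fin 2) ℂ := !![0, 1; 1, 0]

/-- The Pauli matrix σ₂. -/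
def σ2 : Matrix (Fin 2) (Fin 2) ℂ := !![0, -Complex.I; Complex.I, 0]

/-- The Pauli matrix σ₃. -/
def σ3 : Matrix (Fin 2) (Fin 2) ℂ := !![1, 0; 0, -1]

/-- The period lattice Λ = 2ω₁ℤ + 2ω₃ℤ. -/
def lattice (ω₁ ω₃ : ℂ) : Set ℂ :=
  {z | ∃ m n : ℤ, z = 2 * (m : ℂ) * ω₁ + 2 * (n : ℂ) * ω₃}

/-- Twisted double periodicity on a set `S`: `X (z + 2ω_a) = σ_a * X z * σ_a` for `a = 1,2,3`,
with `ω₂ = -ω₁ - ω₃`. -/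
def TwistedPeriodicOn (ω₁ ω₃ : ℂ) (S : Set ℂ)
    (X : ℂ → Matrix (Fin 2) (Fin 2) ℂ) : Prop :=
  (∀ z ∈ S, X (z + 2 * ω₁) = σ1 * X z * σ1) ∧
  (∀ z ∈ S, X (z + 2 * (-ω₁ - ω₃)) = σ2 * X z * σ2) ∧
  (∀ z ∈ S, X (z + 2 * ω₃) = σ3 * X z * σ3)

/-- The vacuum point `W₀`: functions holomorphic on `ℂ ∖ Λ` and twisted doubly periodic there. -/
def W0 (ω₁ ω₃ : ℂ) : Set (ℂ → Matrix (Fin 2) (Fin 2) ℂ) :=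
  {X | DifferentiableOn ℂ X (lattice ω₁ ω₃)ᶜ ∧
       TwistedPeriodicOn ω₁ ω₃ (lattice ω₁ ω₃)ᶜ X}

/-!
Twisted periodicity makes `X (z + p)` an isometric conjugate of `X z` for every `p ∈ Λ`, since
conjugation by `σ₁` or `σ₃` only permutes the entries up to sign. So the limit at `0` transports to
a limit at every lattice point, and `X` extends continuously to `ℂ`; as `Λ` is countable the
extension is entire. Its values are, up to isometry, its values on a compact set meeting every
coset of `Λ`, so it is bounded, hence constant by Liouville. A constant matrix fixed by
conjugation with `σ₁` and `σ₃` is scalar.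
-/

open Bornology

section IsometricPeriods

variable {E : Type*} [NormedAddCommGroup E] [NormedSpace ℂ E]

theorem Complex.differentiable_of_continuous_of_differentiableAt_off_countable [CompleteSpace E]
    {f : ℂ → E} {s : Set ℂ} (hs : s.Countable) (hc : Continuous f)
    (hd : ∀ z ∉ s, DifferentiableAt ℂ f z) : Differentiable ℂ f := fun c =>
  (Complex.hasFPowerSeriesOnBall_of_differentiable_off_countable (c := c) (R := 1) hs
    hc.continuousOn (fun z hz => hd z hz.2) one_pos).analyticAt.differentiableAt

theorem Set.countable_of_discreteTopology {X : Type*} [TopologicalSpace X]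
    [SecondCountableTopology X] (s : Set X) [DiscreteTopology s] : s.Countable :=
  Set.countable_coe_iff.1 countable_of_Lindelof_of_discrete

def isometricPeriods (Λ : AddSubgroup ℂ) (f : ℂ → E) : AddSubgroup ℂ where
  carrier := {p | p ∈ Λ ∧ ∃ T : E ≃ₗᵢ[ℂ] E, ∀ z ∉ Λ, f (z + p) = T (f z)}
  zero_mem' := ⟨Λ.zero_mem, LinearIsometryEquiv.refl ℂ E, by simp⟩
  add_mem' := by
    rintro p q ⟨hp, T, hT⟩ ⟨hq, S, hS⟩
    refine ⟨Λ.add_mem hp hq, S.trans T, fun z hz => ?_⟩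
    have hzq : z + q ∉ Λ := (Λ.add_mem_cancel_right hq).not.2 hz
    rw [← add_assoc, add_right_comm, hT _ hzq, hS _ hz]
    rfl
  neg_mem' := by
    rintro p ⟨hp, T, hT⟩
    refine ⟨Λ.neg_mem hp, T.symm, fun z hz => ?_⟩
    have hzp : z + -p ∉ Λ := (Λ.add_mem_cancel_right (Λ.neg_mem hp)).not.2 hz
    rw [T.eq_symm_apply, ← hT _ hzp, neg_add_cancel_right]

variable {Λ : AddSubgroup ℂ} {f : ℂ → E} {p : ℂ}

theorem norm_apply_add_of_mem_isometricPeriods (hp : p ∈ isometricPeriods Λ f) {z : ℂ}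
    (hz : z ∉ Λ) : ‖f (z + p)‖ = ‖f z‖ := by
  obtain ⟨-, T, hT⟩ := hp
  rw [hT z hz, T.norm_map]

theorem exists_tendsto_of_mem_isometricPeriods (hp : p ∈ isometricPeriods Λ f) {L : E}
    (hlim : Tendsto f (𝓝[(Λ : Set ℂ)ᶜ] 0) (𝓝 L)) :
    ∃ L', Tendsto f (𝓝[(Λ : Set ℂ)ᶜ] p) (𝓝 L') := by
  obtain ⟨hpΛ, T, hT⟩ := hp
  have hshift : Tendsto (· - p) (𝓝[(Λ : Set ℂ)ᶜ] p) (𝓝[(Λ : Set ℂ)ᶜ] 0) := by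
    refine tendsto_nhdsWithin_of_tendsto_nhds_of_eventually_within _ ?_ ?_
    · simpa using ((continuous_sub_right p).tendsto p).mono_left nhdsWithin_le_nhds
    · exact eventually_mem_nhdsWithin.mono fun w hw h => hw (by simpa using Λ.add_mem h hpΛ)
  refine ⟨T L, ((T.continuous.tendsto L).comp (hlim.comp hshift)).congr' ?_⟩
  filter_upwards [hshift.eventually eventually_mem_nhdsWithin] with w hw
  simpa using (hT _ hw).symm

end IsometricPeriods

section Liouville

variable {E : Type*} [NormedAddCommGroup E] [NormedSpace ℂ E] [CompleteSpace E]
  {Λ : AddSubgroup ℂ} [DiscreteTopology Λ] {f : ℂ → E}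

theorem eq_of_tendsto_of_le_isometricPeriods {K : Set ℂ} (hK : IsCompact K)
    (hcover : ∀ z, ∃ p ∈ Λ, z - p ∈ K) (hf : DifferentiableOn ℂ f (Λ : Set ℂ)ᶜ)
    (hper : Λ ≤ isometricPeriods Λ f) {L : E} (hlim : Tendsto f (𝓝[(Λ : Set ℂ)ᶜ] 0) (𝓝 L))
    {z : ℂ} (hz : z ∉ Λ) : f z = L := by
  have hopen : IsOpen (Λ : Set ℂ)ᶜ := AddSubgroup.isClosed_of_discrete.isOpen_compl
  have hcount := (Λ : Set ℂ).countable_of_discreteTopology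
  have hdense : Dense (Λ : Set ℂ)ᶜ := hcount.dense_compl ℂ
  set F := extendFrom (Λ : Set ℂ)ᶜ f
  have hFcont : Continuous F := by
    refine continuous_extendFrom hdense fun w => ?_
    by_cases hw : w ∈ Λ
    · exact exists_tendsto_of_mem_isometricPeriods (hper hw) hlim
    · exact ⟨f w, hf.continuousOn w hw⟩
  have hFf : Set.EqOn F f (Λ : Set ℂ)ᶜ := fun w hw =>
    extendFrom_eq (hdense w) (hf.continuousOn w hw)
  have hFdiff : Differentiable ℂ F :=
    Complex.differentiable_of_continuous_of_differentiableAt_off_countable hcount hFcont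
      fun w hw => ((hf w hw).differentiableAt (hopen.mem_nhds hw)).congr_of_eventuallyEq
        (Filter.eventuallyEq_of_mem (hopen.mem_nhds hw) hFf)
  obtain ⟨C, hC⟩ := hK.exists_bound_of_continuousOn hFcont.continuousOn
  have hbound : F '' (Λ : Set ℂ)ᶜ ⊆ Metric.closedBall 0 C := by
    rintro - ⟨w, hw, rfl⟩
    obtain ⟨p, hp, hwp⟩ := hcover w
    have hwp_notMem : w - p ∉ Λ := fun h => hw (by simpa using Λ.add_mem h hp)
    rw [mem_closedBall_zero_iff, hFf hw, ← sub_add_cancel w p,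
      norm_apply_add_of_mem_isometricPeriods (hper hp) hwp_notMem, ← hFf hwp_notMem]
    exact hC _ hwp
  have hbdd : IsBounded (Set.range F) :=
    ((Metric.isBounded_closedBall.subset hbound).closure).subset
      (hFcont.range_subset_closure_image_dense hdense)
  rw [← hFf hz, hFdiff.apply_eq_apply_of_bounded hbdd z 0]
  exact extendFrom_eq (hdense 0) hlim

end Liouville

section Pauli

theorem σ1_mul_self : σ1 * σ1 = 1 := by
  simp [σ1, Matrix.one_fin_two]

theorem σ3_mul_self : σ3 * σ3 = 1 := by
  simp [σ3, Matrix.one_fin_two]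

theorem σ1_mul_mul_σ1 (M : Matrix (Fin 2) (Fin 2) ℂ) :
    σ1 * M * σ1 = !![M 1 1, M 1 0; M 0 1, M 0 0] := by
  rw [Matrix.eta_fin_two M]
  simp [σ1]

theorem σ3_mul_mul_σ3 (M : Matrix (Fin 2) (Fin 2) ℂ) :
    σ3 * M * σ3 = !![M 0 0, -M 0 1; -M 1 0, M 1 1] := by
  rw [Matrix.eta_fin_two M]
  simp [σ3]

theorem norm_σ1_mul_mul_σ1_le (M : Matrix (Fin 2) (Fin 2) ℂ) : ‖σ1 * M * σ1‖ ≤ ‖M‖ := by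
  refine (Matrix.norm_le_iff (norm_nonneg M)).2 fun i j => ?_
  rw [σ1_mul_mul_σ1]
  fin_cases i <;> fin_cases j <;> exact Matrix.norm_entry_le_entrywise_sup_norm M

theorem norm_σ3_mul_mul_σ3_le (M : Matrix (Fin 2) (Fin 2) ℂ) : ‖σ3 * M * σ3‖ ≤ ‖M‖ := by
  refine (Matrix.norm_le_iff (norm_nonneg M)).2 fun i j => ?_
  rw [σ3_mul_mul_σ3]
  fin_cases i <;> fin_cases j <;> simpa using Matrix.norm_entry_le_entrywise_sup_norm M

theorem eq_smul_one_of_σ1_σ3_conj {L : Matrix (Fin 2) (Fin 2) ℂ} (h1 : σ1 * L * σ1 = L)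
    (h3 : σ3 * L * σ3 = L) : L = L 0 0 • 1 := by
  rw [σ1_mul_mul_σ1] at h1
  rw [σ3_mul_mul_σ3] at h3
  have h01 : L 0 1 = 0 := CharZero.neg_eq_self_iff.1 (by simpa using congrFun₂ h3 0 1)
  have h10 : L 1 0 = 0 := CharZero.neg_eq_self_iff.1 (by simpa using congrFun₂ h3 1 0)
  have h11 : L 1 1 = L 0 0 := by simpa using congrFun₂ h1 0 0
  ext i j
  fin_cases i <;> fin_cases j <;> simp [h01, h10, h11]

end Pauli

theorem mul_mul_mul_self_of_mul_self_eq_one {M : Type*} [Monoid M] {a : M} (ha : a * a = 1)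
    (x : M) : a * (a * x * a) * a = x := by
  rw [← mul_assoc, ← mul_assoc, ha, one_mul, mul_assoc, ha, mul_one]

def Matrix.conjInvolutionIsometry {n : Type*} [Fintype n] [DecidableEq n] (σ : Matrix n n ℂ)
    (hσ : σ * σ = 1) (hnorm : ∀ M, ‖σ * M * σ‖ ≤ ‖M‖) : Matrix n n ℂ ≃ₗᵢ[ℂ] Matrix n n ℂ where
  toLinearEquiv := LinearEquiv.ofInvolutive ((LinearMap.mulRight ℂ σ).comp (LinearMap.mulLeft ℂ σ))
    (mul_mul_mul_self_of_mul_self_eq_one hσ)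
  norm_map' M := le_antisymm (hnorm M) <| by
    conv_lhs => rw [← mul_mul_mul_self_of_mul_self_eq_one hσ M]
    exact hnorm (σ * M * σ)

theorem ZSpan.exists_sub_mem_closedBall {ι E : Type*} [Fintype ι] [NormedAddCommGroup E]
    [NormedSpace ℝ E] (b : Module.Basis ι ℝ E) (z : E) :
    ∃ p ∈ Submodule.span ℤ (Set.range b), z - p ∈ Metric.closedBall 0 (∑ i, ‖b i‖) :=
  ⟨ZSpan.floor b z, (ZSpan.floor b z).2, mem_closedBall_zero_iff.2 (ZSpan.norm_fract_le b z)⟩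

section Lattice

variable {ω₁ ω₃ : ℂ}

def latticeSubgroup (ω₁ ω₃ : ℂ) : AddSubgroup ℂ := AddSubgroup.closure {2 * ω₁, 2 * ω₃}

theorem two_mul_ω₁_mem_latticeSubgroup : 2 * ω₁ ∈ latticeSubgroup ω₁ ω₃ :=
  AddSubgroup.subset_closure (Set.mem_insert _ _)

theorem two_mul_ω₃_mem_latticeSubgroup : 2 * ω₃ ∈ latticeSubgroup ω₁ ω₃ :=
  AddSubgroup.subset_closure (Set.mem_insert_of_mem _ rfl)

theorem coe_latticeSubgroup : (latticeSubgroup ω₁ ω₃ : Set ℂ) = lattice ω₁ ω₃ := by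
  ext z
  simp only [SetLike.mem_coe, latticeSubgroup, AddSubgroup.mem_closure_pair, lattice,
    zsmul_eq_mul]
  constructor <;> rintro ⟨m, n, rfl⟩ <;> exact ⟨m, n, by ring⟩

def latticeBasis (hind : LinearIndependent ℝ ![ω₁, ω₃]) : Module.Basis (Fin 2) ℝ ℂ :=
  basisOfLinearIndependentOfCardEqFinrank (b := ![2 * ω₁, 2 * ω₃])
    (LinearIndependent.pair_iff.2 fun s t h => by
      have := LinearIndependent.pair_iff.1 hind (2 * s) (2 * t)
        (by rw [← h]; simp only [Complex.real_smul]; push_cast; ring)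
      constructor <;> linarith [this.1, this.2])
    (by simp [Complex.finrank_real_complex])

theorem latticeSubgroup_eq_span (hind : LinearIndependent ℝ ![ω₁, ω₃]) :
    latticeSubgroup ω₁ ω₃ = (Submodule.span ℤ (Set.range (latticeBasis hind))).toAddSubgroup := by
  rw [Submodule.span_int_eq_addSubgroupClosure, latticeBasis,
    coe_basisOfLinearIndependentOfCardEqFinrank, Matrix.range_cons, Matrix.range_cons,
    Matrix.range_empty, Set.union_empty, Set.singleton_union]
  rfl

theorem discreteTopology_latticeSubgroup (hind : LinearIndependent ℝ ![ω₁, ω₃]) :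
    DiscreteTopology (latticeSubgroup ω₁ ω₃) :=
  latticeSubgroup_eq_span hind ▸ inferInstance

theorem exists_sub_mem_closedBall_latticeSubgroup (hind : LinearIndependent ℝ ![ω₁, ω₃]) :
    ∃ R, ∀ z, ∃ p ∈ latticeSubgroup ω₁ ω₃, z - p ∈ Metric.closedBall 0 R := by
  rw [latticeSubgroup_eq_span hind]
  exact ⟨_, ZSpan.exists_sub_mem_closedBall (latticeBasis hind)⟩

end Lattice

/-- if `X ∈ W₀` tends to a limit `L` as `z → 0` along `ℂ ∖ Λ`, then
`L = c • 1` for some `c ∈ ℂ` and `X` is constantly `c • 1` on `ℂ ∖ Λ`. -/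
theorem W0_limit_is_scalar (ω₁ ω₃ : ℂ)
    (hind : LinearIndependent ℝ ![ω₁, ω₃])
    (X : ℂ → Matrix (Fin 2) (Fin 2) ℂ) (hX : X ∈ W0 ω₁ ω₃)
    (L : Matrix (Fin 2) (Fin 2) ℂ)
    (hlim : Tendsto X (𝓝[(lattice ω₁ ω₃)ᶜ] 0) (𝓝 L)) :
    ∃ c : ℂ, L = c • (1 : Matrix (Fin 2) (Fin 2) ℂ) ∧
      ∀ z ∈ (lattice ω₁ ω₃)ᶜ, X z = c • (1 : Matrix (Fin 2) (Fin 2) ℂ) := by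
  obtain ⟨hdiff, h1, -, h3⟩ := hX
  rw [← coe_latticeSubgroup] at hdiff h1 h3 hlim ⊢
  set Λ := latticeSubgroup ω₁ ω₃
  have := discreteTopology_latticeSubgroup hind
  obtain ⟨R, hcover⟩ := exists_sub_mem_closedBall_latticeSubgroup hind
  have hper : Λ ≤ isometricPeriods Λ X :=
    (AddSubgroup.closure_le _).2 <| Set.pair_subset
      ⟨two_mul_ω₁_mem_latticeSubgroup,
        Matrix.conjInvolutionIsometry σ1 σ1_mul_self norm_σ1_mul_mul_σ1_le, h1⟩
      ⟨two_mul_ω₃_mem_latticeSubgroup,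
        Matrix.conjInvolutionIsometry σ3 σ3_mul_self norm_σ3_mul_mul_σ3_le, h3⟩
  have hXL : ∀ z ∉ Λ, X z = L := fun z =>
    eq_of_tendsto_of_le_isometricPeriods (isCompact_closedBall 0 R) hcover hdiff hper hlim
  obtain ⟨z, hz⟩ := (((Λ : Set ℂ).countable_of_discreteTopology).dense_compl ℂ).nonempty
  have hconj {p : ℂ} {σ : Matrix (Fin 2) (Fin 2) ℂ} (hp : p ∈ Λ)
      (h : ∀ z ∉ Λ, X (z + p) = σ * X z * σ) : σ * L * σ = L := by
    rw [← hXL z hz, ← h z hz, hXL _ ((Λ.add_mem_cancel_right hp).not.2 hz), hXL z hz]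
  have hL : L = L 0 0 • 1 := eq_smul_one_of_σ1_σ3_conj
    (hconj two_mul_ω₁_mem_latticeSubgroup h1) (hconj two_mul_ω₃_mem_latticeSubgroup h3)
  exact ⟨L 0 0, hL, fun w hw => (hXL w hw).trans hL⟩
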